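/- Let E be a real Hilbert space and let L be an orthomodular lattice admitting a strong set of E-valued states. Then for every n ≥ 2, all a, b : Fin n → L with a(i) ⊥ a(j) for all i ≠ j and a(i) ⊥ b(i) for all i, and every r ∈ L with r ⊥ ⨆_i a(i), equation E′ₙ holds: q ∩ (q → r′) ∩ ((⨆_i a(i)) ∪ r) ≤ ⨆_i b(i), where q = ⨅_i (a(i) ∪ b(i)) and x → y denotes x′ ∪ (x ∩ y). -/

import Mathlib

/-- An ortholattice: a bounded lattice with an orthocomplementation. -/
class Ortholattice (α : Type*) extends Lattice α, BoundedOrder α where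
  ocompl : α → α
  sup_ocompl : ∀ a : α, a ⊔ ocompl a = ⊤
  inf_ocompl : ∀ a : α, a ⊓ ocompl a = ⊥
  ocompl_anti : ∀ a b : α, a ≤ b → ocompl b ≤ ocompl a
  ocompl_ocompl : ∀ a : α, ocompl (ocompl a) = a

postfix:max "ᗮ" => Ortholattice.ocompl

/-- An orthomodular lattice. -/
class OrthomodularLattice (α : Type*) extends Ortholattice α where
  orthomodular : ∀ a b : α, a ≤ b → b = a ⊔ (aᗮ ⊓ b)

/-- The Sasaki hook `x → y = x′ ∪ (x ∩ y)`. -/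
def oimp {α : Type*} [Ortholattice α] (x y : α) : α := xᗮ ⊔ (x ⊓ y)

/-- An `E`-valued state on an ortholattice, for a real Hilbert space `E`. -/
structure HState (E : Type*) [NormedAddCommGroup E] [InnerProductSpace ℝ E]
    (α : Type*) [Ortholattice α] where
  val : α → E
  norm_top : ‖val ⊤‖ = 1
  additive : ∀ a b : α, a ≤ bᗮ → val (a ⊔ b) = val a + val b
  orthogonal : ∀ a b : α, a ≤ bᗮ → (inner ℝ (val a) (val b) : ℝ) = 0

/-- A strong set of `E`-valued states. -/
def IsStrongHSet {E : Type*} [NormedAddCommGroup E] [InnerProductSpace ℝ E]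
    {α : Type*} [Ortholattice α] (S : Set (HState E α)) : Prop :=
  ∀ a b : α, (∀ s ∈ S, ‖s.val a‖ = 1 → ‖s.val b‖ = 1) → a ≤ b

/-!
Let `s` be a state of unit norm on the left-hand side `x`. A state has unit norm on `y` exactly
when it vanishes on `y′`, and then `s y = s 1`. Hence `s` has unit norm on every `y ≥ x`, so
`s q = s 1`, `s r = 0` (modus ponens for the Sasaki hook), `s (⋁ a) = s 1` and
`s (a i) + s (b i) = s 1` for every `i`. The vector `v = s ((⋁ b)′)` is orthogonal to every
`s (b i)`, so `⟪v, s (a i)⟫ = ⟪v, s 1⟫ = ‖v‖²`; summing over the orthogonal family `a` gives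
`‖v‖² = n ‖v‖²`, whence `v = 0` and `‖s (⋁ b)‖ = 1`. Strongness turns this into `x ≤ ⋁ b`.
-/

open Finset

namespace Ortholattice

variable {α : Type*} [Ortholattice α] {a b : α}

theorem le_ocompl_comm : a ≤ bᗮ ↔ b ≤ aᗮ :=
  ⟨fun h => by simpa only [ocompl_ocompl] using ocompl_anti _ _ h,
    fun h => by simpa only [ocompl_ocompl] using ocompl_anti _ _ h⟩

theorem le_ocompl_ocompl (a : α) : a ≤ aᗮᗮ :=
  (ocompl_ocompl a).ge

end Ortholattice

open Ortholattice

namespace HState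

variable {E : Type*} [NormedAddCommGroup E] [InnerProductSpace ℝ E]
  {α : Type*} [Ortholattice α] (s : HState E α) {x y : α}

theorem val_bot : s.val ⊥ = 0 := by
  have h := s.additive ⊥ ⊥ bot_le
  rwa [sup_idem, left_eq_add] at h

theorem val_add_val_ocompl (x : α) : s.val x + s.val xᗮ = s.val ⊤ := by
  rw [← s.additive x xᗮ (le_ocompl_ocompl x), sup_ocompl]

theorem norm_sq_val_sup (h : x ≤ yᗮ) :
    ‖s.val (x ⊔ y)‖ ^ 2 = ‖s.val x‖ ^ 2 + ‖s.val y‖ ^ 2 := by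
  rw [s.additive x y h, norm_add_sq_real, s.orthogonal x y h]
  ring

theorem inner_val_val_top (x : α) : inner ℝ (s.val x) (s.val ⊤) = ‖s.val x‖ ^ 2 := by
  rw [← s.val_add_val_ocompl x, inner_add_right, s.orthogonal x xᗮ (le_ocompl_ocompl x),
    add_zero, real_inner_self_eq_norm_sq]

theorem norm_sq_add_norm_sq_ocompl (x : α) : ‖s.val x‖ ^ 2 + ‖s.val xᗮ‖ ^ 2 = 1 := by
  rw [← s.norm_sq_val_sup (le_ocompl_ocompl x), sup_ocompl, s.norm_top, one_pow]

theorem norm_le_one (x : α) : ‖s.val x‖ ≤ 1 :=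
  (sq_le_one_iff₀ (norm_nonneg _)).1 <| by
    linarith [s.norm_sq_add_norm_sq_ocompl x, sq_nonneg ‖s.val xᗮ‖]

theorem norm_mono (h : x ≤ y) : ‖s.val x‖ ≤ ‖s.val y‖ := by
  have hsup := s.norm_sq_val_sup (h.trans (le_ocompl_ocompl y))
  have hle := pow_le_pow_left₀ (norm_nonneg _) (s.norm_le_one (x ⊔ yᗮ)) 2
  rw [← pow_le_pow_iff_left₀ (norm_nonneg _) (norm_nonneg _) two_ne_zero]
  linarith [s.norm_sq_add_norm_sq_ocompl y]

theorem norm_eq_one_of_le (h : x ≤ y) (hx : ‖s.val x‖ = 1) : ‖s.val y‖ = 1 :=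
  le_antisymm (s.norm_le_one y) (hx ▸ s.norm_mono h)

theorem norm_eq_one_iff : ‖s.val x‖ = 1 ↔ s.val xᗮ = 0 := by
  have h := s.norm_sq_add_norm_sq_ocompl x
  constructor
  · intro hx
    rw [hx, one_pow, add_eq_left, sq_eq_zero_iff, norm_eq_zero] at h
    exact h
  · intro hx
    rwa [hx, norm_zero, zero_pow two_ne_zero, add_zero,
      pow_eq_one_iff_of_nonneg (norm_nonneg _) two_ne_zero] at h

theorem val_eq_val_top_of_norm_eq_one (hx : ‖s.val x‖ = 1) : s.val x = s.val ⊤ := by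
  rw [← s.val_add_val_ocompl x, s.norm_eq_one_iff.1 hx, add_zero]

theorem norm_eq_one_of_oimp (hx : ‖s.val x‖ = 1) (hxy : ‖s.val (oimp x y)‖ = 1) :
    ‖s.val y‖ = 1 := by
  have hsplit : xᗮ ≤ (x ⊓ y)ᗮ := le_ocompl_comm.1 (inf_le_left.trans (le_ocompl_ocompl x))
  rw [oimp, s.additive _ _ hsplit, s.norm_eq_one_iff.1 hx, zero_add] at hxy
  exact s.norm_eq_one_of_le inf_le_right hxy

theorem val_finset_sup {ι : Type*} {a : ι → α} (ha : Pairwise fun i j => a i ≤ (a j)ᗮ)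
    (t : Finset ι) : s.val (t.sup a) = ∑ i ∈ t, s.val (a i) := by
  classical
  induction t using Finset.induction_on with
  | empty => simpa using s.val_bot
  | @insert i t hi ih =>
    have hle : t.sup a ≤ (a i)ᗮ := Finset.sup_le fun j hj => ha fun hji => hi (hji ▸ hj)
    rw [sup_insert, s.additive _ _ (le_ocompl_comm.1 hle), ih, sum_insert hi]

theorem val_ocompl_sup_eq_zero {ι : Type*} [Fintype ι] (hι : Fintype.card ι ≠ 1)
    {a b : ι → α} (ha : Pairwise fun i j => a i ≤ (a j)ᗮ) (hab : ∀ i, a i ≤ (b i)ᗮ)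
    (hsa : s.val (univ.sup a) = s.val ⊤) (hsab : ∀ i, s.val (a i ⊔ b i) = s.val ⊤) :
    s.val (univ.sup b)ᗮ = 0 := by
  set v := s.val (univ.sup b)ᗮ
  have hvb (i : ι) : inner ℝ v (s.val (b i)) = 0 :=
    s.orthogonal _ _ (ocompl_anti _ _ (Finset.le_sup (mem_univ i)))
  have hva (i : ι) : inner ℝ v (s.val (a i)) = inner ℝ v (s.val ⊤) := by
    rw [← hsab i, s.additive _ _ (hab i), inner_add_right, hvb, add_zero]
  have hsum : inner ℝ v (s.val ⊤) = Fintype.card ι * inner ℝ v (s.val ⊤) :=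
    calc inner ℝ v (s.val ⊤) = inner ℝ v (s.val (univ.sup a)) := by rw [hsa]
      _ = ∑ i, inner ℝ v (s.val (a i)) := by rw [s.val_finset_sup ha, inner_sum]
      _ = Fintype.card ι * inner ℝ v (s.val ⊤) := by
        simp only [hva, sum_const, card_univ, nsmul_eq_mul]
  have hvtop : inner ℝ v (s.val ⊤) = 0 := by
    have h : ((Fintype.card ι : ℝ) - 1) * inner ℝ v (s.val ⊤) = 0 := by linarith
    exact (mul_eq_zero.1 h).resolve_left (sub_ne_zero.2 (Nat.cast_ne_one.2 hι))
  rwa [s.inner_val_val_top, sq_eq_zero_iff, norm_eq_zero] at hvtop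

end HState

theorem EprimeN_of_strong_hilbert_states_general {E : Type*} [NormedAddCommGroup E]
    [InnerProductSpace ℝ E]
    {α : Type*} [OrthomodularLattice α]
    (S : Set (HState E α)) (hS : IsStrongHSet S)
    (n : ℕ) (hn : 2 ≤ n) (a b : Fin n → α) (r : α)
    (haa : ∀ i j : Fin n, i ≠ j → a i ≤ (a j)ᗮ)
    (hab : ∀ i : Fin n, a i ≤ (b i)ᗮ)
    (hr : r ≤ (Finset.univ.sup a)ᗮ) :
    Finset.univ.inf (fun i => a i ⊔ b i) ⊓
        oimp (Finset.univ.inf (fun i => a i ⊔ b i)) rᗮ ⊓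
        (Finset.univ.sup a ⊔ r) ≤
      Finset.univ.sup b := by
  set q := univ.inf fun i => a i ⊔ b i
  refine hS _ _ fun s _ hx => ?_
  have hq : ‖s.val q‖ = 1 := s.norm_eq_one_of_le (inf_le_left.trans inf_le_left) hx
  have hsr : s.val r = 0 := by
    have hr' := s.norm_eq_one_of_oimp hq (s.norm_eq_one_of_le (inf_le_left.trans inf_le_right) hx)
    rwa [s.norm_eq_one_iff, ocompl_ocompl] at hr'
  have hsa : s.val (univ.sup a) = s.val ⊤ := by
    refine s.val_eq_val_top_of_norm_eq_one ?_
    rw [← add_zero (s.val _), ← hsr, ← s.additive _ _ (le_ocompl_comm.1 hr)]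
    exact s.norm_eq_one_of_le inf_le_right hx
  have hsab (i : Fin n) : s.val (a i ⊔ b i) = s.val ⊤ := by
    refine s.val_eq_val_top_of_norm_eq_one (s.norm_eq_one_of_le ?_ hq)
    exact Finset.inf_le (mem_univ i)
  have hcard : Fintype.card (Fin n) ≠ 1 := by rw [Fintype.card_fin]; omega
  exact s.norm_eq_one_iff.2 (s.val_ocompl_sup_eq_zero hcard haa hab hsa hsab)

theorem EprimeN_of_strong_hilbert_states {E : Type*} [NormedAddCommGroup E]
    [InnerProductSpace ℝ E] [CompleteSpace E]
    {α : Type*} [OrthomodularLattice α]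
    (S : Set (HState E α)) (hS : IsStrongHSet S)
    (n : ℕ) (hn : 2 ≤ n) (a b : Fin n → α) (r : α)
    (haa : ∀ i j : Fin n, i ≠ j → a i ≤ (a j)ᗮ)
    (hab : ∀ i : Fin n, a i ≤ (b i)ᗮ)
    (hr : r ≤ (Finset.univ.sup a)ᗮ) :
    Finset.univ.inf (fun i => a i ⊔ b i) ⊓
        oimp (Finset.univ.inf (fun i => a i ⊔ b i)) rᗮ ⊓
        (Finset.univ.sup a ⊔ r) ≤
      Finset.univ.sup b :=
  EprimeN_of_strong_hilbert_states_general S hS n hn a b r haa hab hr
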